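/- Let $\Omega \subset \mathbb{R}^N$ ($N \geq 2$) have finite measure, $0 < 2s < N$, $1 < p < 2$, and suppose $K(x,y) = |x-y|^{-(N-2s)}$ lies in $L^{p/(p-1)}(\Omega \times \Omega)$ with norm $S$. If $\lambda_1(\Omega) = \sup_{u \neq 0} \frac{\int_\Omega \int_\Omega \frac{u(x)u(y)}{|x-y|^{N-2s}}\,dx\,dy}{\|u\|_{L^2(\Omega)}^2}$ is the first eigenvalue of the Riesz potential $\mathfrak{R}u(x) = \int_\Omega \frac{u(y)}{|x-y|^{N-2s}}dy$, then $\lambda_1(\Omega) \leq S\, |\Omega|^{\frac{2-p}{p}}$. -/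

import Mathlib

open Real MeasureTheory

/-! For `u ∈ L²(Ω)`, Hölder's inequality on `Ω × Ω` with exponents `p` and `p' = p / (p - 1)`
gives `|∫∫ u(x) u(y) K(x, y)| ≤ ‖|u| ⊗ |u|‖_p ‖K‖_{p'} = ‖u‖_p² S`, and Hölder's inequality on
`Ω` gives `‖u‖_p ≤ |Ω| ^ (1/p - 1/2) ‖u‖_2`. Hence every Rayleigh quotient, and so `λ₁(Ω)`, is at
most `S |Ω| ^ ((2 - p) / p)`. -/

section

variable {α : Type*} [MeasurableSpace α] {μ : Measure α}

lemma memLp_ofReal_of_integrable_rpow {f : α → ℝ} {q : ℝ} (hq : 0 < q) (hf0 : ∀ x, 0 ≤ f x)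
    (hf : AEStronglyMeasurable f μ) (hfq : Integrable (fun x => f x ^ q) μ) :
    MemLp f (ENNReal.ofReal q) μ := by
  refine (integrable_norm_rpow_iff hf (by simpa using hq) ENNReal.ofReal_ne_top).1 ?_
  simpa only [ENNReal.toReal_ofReal hq.le, Real.norm_of_nonneg (hf0 _)] using hfq

lemma integral_rpow_one_div_le_mul_measureReal_univ_rpow [IsFiniteMeasure μ] {g : α → ℝ}
    {p q : ℝ} (hp : 0 < p) (hpq : p < q) (hg0 : ∀ x, 0 ≤ g x) (hg : AEStronglyMeasurable g μ)
    (hgq : Integrable (fun x => g x ^ q) μ) :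
    (∫ x, g x ^ p ∂μ) ^ (1 / p) ≤
      (∫ x, g x ^ q ∂μ) ^ (1 / q) * μ.real Set.univ ^ (1 / p - 1 / q) := by
  have hq : 0 < q := hp.trans hpq
  have hconj : (q / p).HolderConjugate (q / (q - p)) := by
    refine ⟨?_, by positivity, div_pos hq (by linarith)⟩
    field_simp
    ring
  have hpow : ∀ x, (g x ^ p) ^ (q / p) = g x ^ q := fun x => by
    rw [← rpow_mul (hg0 x), mul_div_cancel₀ _ hp.ne']
  have hgp : MemLp (fun x => g x ^ p) (ENNReal.ofReal (q / p)) μ :=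
    memLp_ofReal_of_integrable_rpow (by positivity) (fun x => rpow_nonneg (hg0 x) p)
      (hg.aemeasurable.pow_const p).aestronglyMeasurable (by simpa only [hpow] using hgq)
  have holder := integral_mul_le_Lp_mul_Lq_of_nonneg hconj
    (.of_forall fun x => rpow_nonneg (hg0 x) p) (.of_forall fun _ => zero_le_one) hgp
    (memLp_const 1)
  simp only [mul_one, one_rpow, integral_const, smul_eq_mul, hpow, one_div_div] at holder
  calc (∫ x, g x ^ p ∂μ) ^ (1 / p)
      ≤ ((∫ x, g x ^ q ∂μ) ^ (p / q) * μ.real Set.univ ^ ((q - p) / q)) ^ (1 / p) := by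
        gcongr
        exact integral_nonneg fun x => rpow_nonneg (hg0 x) p
    _ = (∫ x, g x ^ q ∂μ) ^ (1 / q) * μ.real Set.univ ^ (1 / p - 1 / q) := by
        have hI : 0 ≤ ∫ x, g x ^ q ∂μ := integral_nonneg fun x => rpow_nonneg (hg0 x) q
        rw [mul_rpow (rpow_nonneg hI _) (rpow_nonneg measureReal_nonneg _), ← rpow_mul hI,
          ← rpow_mul measureReal_nonneg]
        congr 2 <;> field_simp

lemma integral_prod_mul_rpow [SFinite μ] {g : α → ℝ} {p : ℝ} (hg0 : ∀ x, 0 ≤ g x) :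
    ∫ z, (g z.1 * g z.2) ^ p ∂μ.prod μ = (∫ x, g x ^ p ∂μ) ^ 2 := by
  simp_rw [mul_rpow (hg0 _) (hg0 _)]
  exact (integral_prod_mul (fun x => g x ^ p) (fun x => g x ^ p)).trans (sq _).symm

lemma memLp_prod_mul [SFinite μ] {g : α → ℝ} {p : ℝ} (hp : 0 < p) (hg0 : ∀ x, 0 ≤ g x)
    (hg : AEStronglyMeasurable g μ) (hgp : Integrable (fun x => g x ^ p) μ) :
    MemLp (fun z : α × α => g z.1 * g z.2) (ENNReal.ofReal p) (μ.prod μ) := by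
  refine memLp_ofReal_of_integrable_rpow hp (fun z => mul_nonneg (hg0 _) (hg0 _))
    (hg.comp_fst.mul hg.comp_snd) ?_
  simpa only [mul_rpow (hg0 _) (hg0 _)] using hgp.mul_prod hgp

theorem integral_integral_mul_mul_le [IsFiniteMeasure μ] {p q : ℝ} (hpq : p.HolderConjugate q)
    (hp2 : p < 2) {K : α × α → ℝ} (hK0 : ∀ z, 0 ≤ K z) (hK : AEStronglyMeasurable K (μ.prod μ))
    (hKq : Integrable (fun z => K z ^ q) (μ.prod μ)) {u : α → ℝ}
    (hu : Integrable (fun x => u x ^ 2) μ) :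
    ∫ x, ∫ y, u x * u y * K (x, y) ∂μ ∂μ ≤
      (∫ z, K z ^ q ∂μ.prod μ) ^ (1 / q) * μ.real Set.univ ^ ((2 - p) / p) *
        ∫ x, u x ^ 2 ∂μ := by
  have hp := hpq.pos
  set g : α → ℝ := fun x => |u x|
  have hg0 : ∀ x, 0 ≤ g x := fun x => abs_nonneg _
  have hg : AEStronglyMeasurable g μ := by
    simpa only [sqrt_sq_eq_abs] using continuous_sqrt.comp_aestronglyMeasurable hu.1
  have hg2 : ∀ x, g x ^ (2 : ℝ) = u x ^ 2 := fun x => by rw [rpow_two, sq_abs]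
  have hg2_int : Integrable (fun x => g x ^ (2 : ℝ)) μ := by simpa only [hg2] using hu
  have hgp : Integrable (fun x => g x ^ p) μ := by
    simpa only [norm_of_nonneg (hg0 _)] using integrable_norm_rpow_of_le hg hp.le zero_le_two
      hp2.le (by simpa only [norm_of_nonneg (hg0 _)] using hg2_int)
  have hF := memLp_prod_mul hp hg0 hg hgp
  have hKLq := memLp_ofReal_of_integrable_rpow hpq.symm.pos hK0 hK hKq
  have := hpq.ennrealOfReal
  have hFK : Integrable (fun z : α × α => g z.1 * g z.2 * K z) (μ.prod μ) :=
    memLp_one_iff_integrable.1 (hKLq.mul' hF)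
  have hI : 0 ≤ ∫ x, g x ^ p ∂μ := integral_nonneg fun x => rpow_nonneg (hg0 x) p
  set S := (∫ z, K z ^ q ∂μ.prod μ) ^ (1 / q)
  calc ∫ x, ∫ y, u x * u y * K (x, y) ∂μ ∂μ
      ≤ ∫ x, ‖∫ y, u x * u y * K (x, y) ∂μ‖ ∂μ := (le_norm_self _).trans
        (norm_integral_le_integral_norm _)
    _ ≤ ∫ x, ∫ y, g x * g y * K (x, y) ∂μ ∂μ := by
        -- `u` need not be measurable, but `|u| = √(u ^ 2)` is, and only `|u|` remains here.
        refine integral_mono_of_nonneg (.of_forall fun _ => norm_nonneg _)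
          hFK.integral_prod_left (.of_forall fun x => ?_)
        refine (norm_integral_le_integral_norm _).trans_eq (integral_congr_ae (.of_forall ?_))
        intro y
        simp only [g, norm_mul, norm_eq_abs, abs_of_nonneg (hK0 (x, y))]
    _ = ∫ z, g z.1 * g z.2 * K z ∂μ.prod μ := integral_integral hFK
    _ ≤ (∫ z, (g z.1 * g z.2) ^ p ∂μ.prod μ) ^ (1 / p) * S :=
        integral_mul_le_Lp_mul_Lq_of_nonneg hpq
          (.of_forall fun z => mul_nonneg (hg0 _) (hg0 _)) (.of_forall hK0) hF hKLq
    _ = ((∫ x, g x ^ p ∂μ) ^ (1 / p)) ^ 2 * S := by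
        rw [integral_prod_mul_rpow hg0, rpow_pow_comm hI]
    _ ≤ ((∫ x, g x ^ (2 : ℝ) ∂μ) ^ (1 / 2 : ℝ) * μ.real Set.univ ^ (1 / p - 1 / 2)) ^ 2 * S := by
        have : 0 ≤ S := rpow_nonneg (integral_nonneg fun z => rpow_nonneg (hK0 z) q) _
        gcongr
        exact integral_rpow_one_div_le_mul_measureReal_univ_rpow hp hp2 hg0 hg hg2_int
    _ = S * μ.real Set.univ ^ ((2 - p) / p) * ∫ x, u x ^ 2 ∂μ := by
        have hD : 0 ≤ ∫ x, g x ^ (2 : ℝ) ∂μ := integral_nonneg fun x => rpow_nonneg (hg0 x) _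
        rw [mul_pow, ← rpow_mul_natCast hD, ← rpow_mul_natCast measureReal_nonneg,
          integral_congr_ae (.of_forall hg2)]
        have hexp : (1 / p - 1 / 2) * ((2 : ℕ) : ℝ) = (2 - p) / p := by field_simp; ring
        have hhalf : (1 / 2 : ℝ) * ((2 : ℕ) : ℝ) = 1 := by norm_num
        rw [hexp, hhalf, rpow_one]
        ring

end

theorem riesz_first_eigenvalue_bound_general (N : ℕ) (s p : ℝ)
    (hp1 : 1 < p) (hp2 : p < 2)
    (Ω : Set (EuclideanSpace ℝ (Fin N)))
    (hΩfin : volume Ω < ⊤)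
    (hK : IntegrableOn
      (fun z : EuclideanSpace ℝ (Fin N) × EuclideanSpace ℝ (Fin N) =>
        (‖z.1 - z.2‖ ^ (-((N : ℝ) - 2 * s))) ^ (p / (p - 1))) (Ω ×ˢ Ω))
    (S : ℝ)
    (hS : S = (∫ z in Ω ×ˢ Ω,
        (‖z.1 - z.2‖ ^ (-((N : ℝ) - 2 * s))) ^ (p / (p - 1))) ^ ((p - 1) / p))
    (lam1 : ℝ)
    (hlam : lam1 = sSup {r : ℝ | ∃ u : EuclideanSpace ℝ (Fin N) → ℝ,
        (∫ x in Ω, (u x) ^ 2) ≠ 0 ∧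
        r = (∫ x in Ω, ∫ y in Ω, u x * u y / ‖x - y‖ ^ ((N : ℝ) - 2 * s)) /
              (∫ x in Ω, (u x) ^ 2)}) :
    lam1 ≤ S * (volume Ω).toReal ^ ((2 - p) / p) := by
  have : IsFiniteMeasure (volume.restrict Ω) := isFiniteMeasure_restrict.2 hΩfin.ne
  have hprod : (volume.restrict Ω).prod (volume.restrict Ω) = volume.restrict (Ω ×ˢ Ω) := by
    rw [Measure.prod_restrict, ← Measure.volume_eq_prod]
  have hpq : p.HolderConjugate (p / (p - 1)) := (holderConjugate_iff_eq_conjExponent hp1).2 rfl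
  rw [hlam]
  refine Real.sSup_le ?_ (by rw [hS]; positivity)
  rintro r ⟨u, hu, rfl⟩
  have hu2 : Integrable (fun x => u x ^ 2) (volume.restrict Ω) :=
    not_imp_comm.1 integral_undef hu
  have hD : 0 < ∫ x in Ω, u x ^ 2 := (integral_nonneg fun x => sq_nonneg _).lt_of_ne' hu
  have hbound := integral_integral_mul_mul_le hpq hp2
    (K := fun z => ‖z.1 - z.2‖ ^ (-((N : ℝ) - 2 * s))) (fun z => rpow_nonneg (norm_nonneg _) _)
    ((measurable_fst.sub measurable_snd).norm.pow_const _).aestronglyMeasurable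
    (by rw [hprod]; exact hK) hu2
  rw [hprod, one_div_div, ← hS, measureReal_restrict_apply_univ, measureReal_def] at hbound
  rw [div_le_iff₀ hD]
  simpa only [div_eq_mul_inv, ← rpow_neg (norm_nonneg _)] using hbound

theorem riesz_first_eigenvalue_bound (N : ℕ) (hN : 2 ≤ N) (s p : ℝ)
    (hs : 0 < 2 * s) (hsN : 2 * s < N) (hp1 : 1 < p) (hp2 : p < 2)
    (Ω : Set (EuclideanSpace ℝ (Fin N))) (hΩ : MeasurableSet Ω)
    (hΩfin : volume Ω < ⊤)
    (hK : IntegrableOn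
      (fun z : EuclideanSpace ℝ (Fin N) × EuclideanSpace ℝ (Fin N) =>
        (‖z.1 - z.2‖ ^ (-((N : ℝ) - 2 * s))) ^ (p / (p - 1))) (Ω ×ˢ Ω))
    (S : ℝ)
    (hS : S = (∫ z in Ω ×ˢ Ω,
        (‖z.1 - z.2‖ ^ (-((N : ℝ) - 2 * s))) ^ (p / (p - 1))) ^ ((p - 1) / p))
    (lam1 : ℝ)
    (hlam : lam1 = sSup {r : ℝ | ∃ u : EuclideanSpace ℝ (Fin N) → ℝ,
        (∫ x in Ω, (u x) ^ 2) ≠ 0 ∧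
        r = (∫ x in Ω, ∫ y in Ω, u x * u y / ‖x - y‖ ^ ((N : ℝ) - 2 * s)) /
              (∫ x in Ω, (u x) ^ 2)}) :
    lam1 ≤ S * (volume Ω).toReal ^ ((2 - p) / p) :=
  riesz_first_eigenvalue_bound_general N s p hp1 hp2 Ω hΩfin hK S hS lam1 hlam
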